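/- arXiv:1706.01903 — 2 statements merged into one kernel-verified Lean document; each statement's English description precedes it below -/
import Mathlib

section
/- Let V be a finite-dimensional real vector space with a nondegenerate symmetric bilinear form B, let Λ be a self-dual integral lattice in V, let V = V₁ ⊕ V₂ be an orthogonal direct-sum decomposition, and set Λᵢ = Λ ∩ Vᵢ; assume each Λᵢ spans Vᵢ over ℝ. Then the image of Λ under the projection p₁ : V → V₁ (along V₂) is exactly the dual lattice Λ₁* of Λ₁ inside V₁. -/
/-- The dual lattice of a lattice `L` inside a subspace `W` of `V`, with respect to the
bilinear form `B`: the set of vectors of `W` pairing integrally with every element of `L`. -/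
def dualLattice {V : Type*} [AddCommGroup V] [Module ℝ V]
    (B : V →ₗ[ℝ] V →ₗ[ℝ] ℝ) (W : Submodule ℝ V) (L : AddSubgroup V) : AddSubgroup V where
  carrier := {v | v ∈ W ∧ ∀ l ∈ L, ∃ n : ℤ, B v l = (n : ℝ)}
  zero_mem' := ⟨W.zero_mem, fun l _ => ⟨0, by simp⟩⟩
  add_mem' := by
    rintro a b ⟨haW, ha⟩ ⟨hbW, hb⟩
    refine ⟨W.add_mem haW hbW, fun l hl => ?_⟩
    obtain ⟨m, hm⟩ := ha l hl
    obtain ⟨n, hn⟩ := hb l hl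
    exact ⟨m + n, by simp [map_add, hm, hn]⟩
  neg_mem' := by
    rintro a ⟨haW, ha⟩
    refine ⟨W.neg_mem haW, fun l hl => ?_⟩
    obtain ⟨m, hm⟩ := ha l hl
    exact ⟨-m, by simp [map_neg, hm]⟩

/-!
The inclusion `p₁ Λ ⊆ Λ₁*` holds because `B (p₁ l) e = B l e` for `e ∈ V₁`. Conversely, given
`v ∈ Λ₁*` we look for `w ∈ V₂` with `v + w ∈ Λ = Λ*`. The image `L = p₂ Λ` lies in the dual of
`Λ₂ = Λ ∩ V₂`, which spans `V₂`, so `L` is a full lattice in `V₂`; being free, it admits a section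
`L → Λ` of `p₂`. The functional `l ↦ B v l` is integral on `Λ₁ = ker (p₂ : Λ → L)`, so modulo `ℤ`
it equals `f ∘ p₂` for the real linear extension `f` of its values along that section, and `w`
is the vector of `V₂` representing `-f` under the nondegenerate form `B|V₂`.
-/

open LinearMap (BilinForm)

namespace LinearMap.BilinForm

section Projection

variable {R M : Type*} [CommRing R] [AddCommGroup M] [Module R M] {p q : Submodule R M}

theorem apply_projection_left (B : BilinForm R M) (hpq : IsCompl p q) {y : M}
    (hy : ∀ z ∈ q, B z y = 0) (x : M) : B (p.projection q hpq x) y = B x y := by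
  conv_rhs => rw [← Submodule.projection_add_projection_eq_self hpq x]
  rw [map_add, LinearMap.add_apply, hy _ (Submodule.projection_apply_mem _ _), add_zero]

theorem apply_projection_right (B : BilinForm R M) (hpq : IsCompl p q) {y : M}
    (hy : ∀ z ∈ q, B y z = 0) (x : M) : B y (p.projection q hpq x) = B y x :=
  B.flip.apply_projection_left hpq hy x

theorem nondegenerate_restrict_of_isCompl {B : BilinForm R M} (hsep : B.SeparatingLeft)
    (hrefl : B.IsRefl) (hpq : IsCompl p q) (horth : ∀ x ∈ p, ∀ y ∈ q, B x y = 0) :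
    (B.restrict p).Nondegenerate := by
  refine (hrefl.domRestrict p).nondegenerate_iff_separatingLeft.mpr fun ⟨x, hx⟩ h ↦ ?_
  refine Subtype.ext (hsep x fun y ↦ ?_)
  rw [← B.apply_projection_right hpq (horth x hx)]
  exact h ⟨_, Submodule.projection_apply_mem hpq y⟩

end Projection

variable {E : Type*} [NormedAddCommGroup E] [NormedSpace ℝ E] [FiniteDimensional ℝ E]

theorem discreteTopology_dualSubmodule {B : BilinForm ℝ E} (hB : B.Nondegenerate)
    {N : Submodule ℤ E} (hN : Submodule.span ℝ (N : Set E) = ⊤) :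
    DiscreteTopology (B.dualSubmodule N) := by
  classical
  obtain ⟨s, hsN, hs_span, hs_li⟩ := exists_linearIndependent ℝ (N : Set E)
  have : Finite s := hs_li.setFinite
  let b := Module.Basis.mk hs_li (by rw [Subtype.range_coe, hs_span, hN])
  have hbN : Submodule.span ℤ (Set.range b) ≤ N := by
    rw [Submodule.span_le, Module.Basis.coe_mk, Subtype.range_coe]
    exact hsN
  have hdual : B.dualSubmodule N ≤ Submodule.span ℤ (Set.range (B.dualBasis hB b)) := by
    rw [← B.dualSubmodule_span_of_basis hB b]
    exact fun x hx y hy ↦ hx y (hbN hy)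
  exact DiscreteTopology.of_subset
    (inferInstance : DiscreteTopology (Submodule.span ℤ (Set.range (B.dualBasis hB b)))) hdual

end LinearMap.BilinForm

namespace IsZLattice

variable {E : Type*} [NormedAddCommGroup E] [NormedSpace ℝ E] [FiniteDimensional ℝ E]

theorem exists_extend {F : Type*} [AddCommGroup F] [Module ℝ F] (L : Submodule ℤ E)
    [DiscreteTopology L] [IsZLattice ℝ L] (φ : L →ₗ[ℤ] F) :
    ∃ f : E →ₗ[ℝ] F, (f.restrictScalars ℤ).comp L.subtype = φ := by
  have : Module.Free ℤ L := ZLattice.module_free ℝ L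
  let b := Module.Free.chooseBasis ℤ L
  refine ⟨(b.ofZLatticeBasis ℝ L).constr ℝ (φ ∘ b), b.ext fun i ↦ ?_⟩
  rw [LinearMap.comp_apply, LinearMap.restrictScalars_apply, Submodule.subtype_apply,
    ← b.ofZLatticeBasis_apply ℝ L i, Module.Basis.constr_basis]
  rfl

theorem exists_linearMap_eq_comp_add_int {G : Type*} [AddCommGroup G] (Λ : Submodule ℤ G)
    (π : G →ₗ[ℤ] E) [DiscreteTopology (Λ.map π)] [IsZLattice ℝ (Λ.map π)] (ψ : G →ₗ[ℤ] ℝ)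
    (hψ : ∀ g ∈ Λ, π g = 0 → ∃ n : ℤ, ψ g = n) :
    ∃ f : E →ₗ[ℝ] ℝ, ∀ g ∈ Λ, ∃ n : ℤ, ψ g = f (π g) + n := by
  have : Module.Free ℤ (Λ.map π) := ZLattice.module_free ℝ _
  obtain ⟨σ, hσ⟩ := Module.projective_lifting_property (π.submoduleMap Λ) LinearMap.id
    (π.submoduleMap_surjective Λ)
  obtain ⟨f, hf⟩ := exists_extend _ (ψ ∘ₗ Λ.subtype ∘ₗ σ)
  refine ⟨f, fun g hg ↦ ?_⟩
  set s : G := (σ (π.submoduleMap Λ ⟨g, hg⟩) : G)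
  have hπs : π s = π g := congrArg Subtype.val (LinearMap.congr_fun hσ _)
  obtain ⟨n, hn⟩ := hψ (g - s) (sub_mem hg (σ _).2) (by rw [map_sub, hπs, sub_self])
  have hfπ : f (π g) = ψ s := LinearMap.congr_fun hf (π.submoduleMap Λ ⟨g, hg⟩)
  exact ⟨n, by rw [hfπ, ← hn, map_sub, add_sub_cancel]⟩

end IsZLattice

section SelfDual

variable {V : Type*} [AddCommGroup V] [Module ℝ V] {B : BilinForm ℝ V} {Λ : AddSubgroup V}
  {V₁ V₂ : Submodule ℝ V}

theorem image_projection_subset_dualLattice (hrefl : B.IsRefl)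
    (hint : ∀ x ∈ Λ, ∀ y ∈ Λ, ∃ n : ℤ, B x y = n) (hcompl : IsCompl V₁ V₂)
    (horth : ∀ v₁ ∈ V₁, ∀ v₂ ∈ V₂, B v₁ v₂ = 0) :
    V₁.projection V₂ hcompl '' Λ ⊆ dualLattice B V₁ (Λ ⊓ V₁.toAddSubgroup) := by
  rintro _ ⟨l, hl, rfl⟩
  refine ⟨Submodule.projection_apply_mem hcompl l, fun e ⟨heΛ, heV₁⟩ ↦ ?_⟩
  rw [B.apply_projection_left hcompl fun z hz ↦ hrefl _ _ (horth e heV₁ z hz)]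
  exact hint l hl e heΛ

theorem span_map_projectionOnto_inf_eq_top (hcompl : IsCompl V₁ V₂)
    (hspan2 : Submodule.span ℝ ((Λ ⊓ V₂.toAddSubgroup : AddSubgroup V) : Set V) = V₂) :
    Submodule.span ℝ (((Λ ⊓ V₂.toAddSubgroup).toIntSubmodule.map
      ((V₂.projectionOnto V₁ hcompl.symm).restrictScalars ℤ) : Submodule ℤ V₂) : Set V₂) = ⊤ := by
  rw [Submodule.map_coe, AddSubgroup.coe_toIntSubmodule, LinearMap.coe_restrictScalars,
    ← Submodule.map_span, hspan2]
  exact eq_top_iff.2 fun x _ ↦ ⟨x, x.2, Submodule.projectionOnto_apply_left _ x⟩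

theorem map_projectionOnto_le_dualSubmodule (hint : ∀ x ∈ Λ, ∀ y ∈ Λ, ∃ n : ℤ, B x y = n)
    (hcompl : IsCompl V₁ V₂) (horth : ∀ v₁ ∈ V₁, ∀ v₂ ∈ V₂, B v₁ v₂ = 0) :
    Λ.toIntSubmodule.map ((V₂.projectionOnto V₁ hcompl.symm).restrictScalars ℤ) ≤
      (B.restrict V₂).dualSubmodule ((Λ ⊓ V₂.toAddSubgroup).toIntSubmodule.map
        ((V₂.projectionOnto V₁ hcompl.symm).restrictScalars ℤ)) := by
  rintro _ ⟨l, hl, rfl⟩ _ ⟨e, ⟨heΛ, heV₂⟩, rfl⟩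
  obtain ⟨n, hn⟩ := hint l hl e heΛ
  refine Submodule.mem_one.mpr ⟨n, ?_⟩
  change (n : ℝ) = B (V₂.projection V₁ hcompl.symm l) (V₂.projection V₁ hcompl.symm e)
  rw [Submodule.projection_apply_of_mem_left _ heV₂,
    B.apply_projection_left hcompl.symm fun z hz ↦ horth z hz e heV₂, hn]

end SelfDual

theorem exists_add_mem_of_mem_dualLattice {V : Type*} [NormedAddCommGroup V] [NormedSpace ℝ V]
    [FiniteDimensional ℝ V] {B : BilinForm ℝ V} {Λ : AddSubgroup V} {V₁ V₂ : Submodule ℝ V}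
    (hsep : B.SeparatingLeft) (hrefl : B.IsRefl) (hint : ∀ x ∈ Λ, ∀ y ∈ Λ, ∃ n : ℤ, B x y = n)
    (hselfdual : ∀ v, (∀ l ∈ Λ, ∃ n : ℤ, B v l = n) → v ∈ Λ) (hcompl : IsCompl V₁ V₂)
    (horth : ∀ v₁ ∈ V₁, ∀ v₂ ∈ V₂, B v₁ v₂ = 0)
    (hspan2 : Submodule.span ℝ ((Λ ⊓ V₂.toAddSubgroup : AddSubgroup V) : Set V) = V₂) {v : V}
    (hv : v ∈ dualLattice B V₁ (Λ ⊓ V₁.toAddSubgroup)) : ∃ w ∈ V₂, v + w ∈ Λ := by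
  have horth' : ∀ v₂ ∈ V₂, ∀ v₁ ∈ V₁, B v₂ v₁ = 0 := fun v₂ h₂ v₁ h₁ ↦ hrefl _ _ (horth v₁ h₁ v₂ h₂)
  have hB₂ := B.nondegenerate_restrict_of_isCompl hsep hrefl hcompl.symm horth'
  have hN := span_map_projectionOnto_inf_eq_top hcompl hspan2
  have hL := map_projectionOnto_le_dualSubmodule hint hcompl horth
  set Q := (V₂.projectionOnto V₁ hcompl.symm).restrictScalars ℤ
  have : DiscreteTopology (Λ.toIntSubmodule.map Q) :=
    .of_subset ((B.restrict V₂).discreteTopology_dualSubmodule hB₂ hN) hL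
  have : IsZLattice ℝ (Λ.toIntSubmodule.map Q) :=
    ⟨eq_top_iff.2 (hN.ge.trans (Submodule.span_mono
      (Submodule.map_mono (AddSubgroup.toIntSubmodule.monotone inf_le_left))))⟩
  obtain ⟨f, hf⟩ := IsZLattice.exists_linearMap_eq_comp_add_int Λ.toIntSubmodule Q
    ((B v).restrictScalars ℤ) fun g hg hQg ↦
      hv.2 g ⟨hg, (Submodule.projectionOnto_apply_eq_zero_iff hcompl.symm).1 hQg⟩
  set w : V₂ := ((B.restrict V₂).toDual hB₂).symm (-f)
  refine ⟨w, w.2, hselfdual _ fun l hl ↦ ?_⟩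
  obtain ⟨n, hn⟩ := hf l hl
  have hw : B w l = -f (Q l) := by
    rw [← B.apply_projection_right hcompl.symm (horth' w w.2) l]
    exact (B.restrict V₂).apply_toDual_symm_apply (-f) (Q l)
  rw [LinearMap.restrictScalars_apply] at hn
  exact ⟨n, by rw [map_add, LinearMap.add_apply, hw, hn]; ring⟩

theorem selfdual_lattice_projection_eq_dualLattice_general
    {V : Type*} [NormedAddCommGroup V] [NormedSpace ℝ V] [FiniteDimensional ℝ V]
    (B : V →ₗ[ℝ] V →ₗ[ℝ] ℝ)
    (hsymm : ∀ x y, B x y = B y x)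
    (hnondeg : ∀ x, (∀ y, B x y = 0) → x = 0)
    (Λ : AddSubgroup V)
    (hint : ∀ x ∈ Λ, ∀ y ∈ Λ, ∃ n : ℤ, B x y = (n : ℝ))
    (hselfdual : ∀ v : V, v ∈ Λ ↔ ∀ l ∈ Λ, ∃ n : ℤ, B v l = (n : ℝ))
    (V₁ V₂ : Submodule ℝ V)
    (hcompl : IsCompl V₁ V₂)
    (horth : ∀ v₁ ∈ V₁, ∀ v₂ ∈ V₂, B v₁ v₂ = 0)
    (hspan2 : Submodule.span ℝ ((Λ ⊓ V₂.toAddSubgroup : AddSubgroup V) : Set V) = V₂) :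
    (fun a : V => ((V₁.linearProjOfIsCompl V₂ hcompl) a : V)) '' (Λ : Set V) =
      (dualLattice B V₁ (Λ ⊓ V₁.toAddSubgroup) : Set V) := by
  have hrefl : B.IsRefl := fun x y h ↦ by rwa [hsymm]
  refine (image_projection_subset_dualLattice hrefl hint hcompl horth).antisymm fun v hv ↦ ?_
  obtain ⟨w, hw, hvw⟩ := exists_add_mem_of_mem_dualLattice hnondeg hrefl hint
    (fun v ↦ (hselfdual v).2) hcompl horth hspan2 hv
  refine ⟨v + w, hvw, ?_⟩
  simp [Submodule.projection_apply_of_mem_left hcompl hv.1,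
    Submodule.projection_apply_of_mem_right hcompl hw]

/-- If `Λ` is a self-dual integral lattice in a finite-dimensional real vector
space `V` with nondegenerate symmetric bilinear form `B`, and `V = V₁ ⊕ V₂` is an orthogonal
decomposition with `Λᵢ = Λ ∩ Vᵢ` spanning `Vᵢ`, then the image of `Λ` under the projection
`p₁ : V → V₁` along `V₂` is exactly the dual lattice `Λ₁*` of `Λ₁` inside `V₁`. -/
theorem selfdual_lattice_projection_eq_dualLattice
    {V : Type*} [NormedAddCommGroup V] [NormedSpace ℝ V] [FiniteDimensional ℝ V]
    (B : V →ₗ[ℝ] V →ₗ[ℝ] ℝ)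
    (hsymm : ∀ x y, B x y = B y x)
    (hnondeg : ∀ x, (∀ y, B x y = 0) → x = 0)
    (Λ : AddSubgroup V)
    (hdisc : DiscreteTopology Λ)
    (hspan : Submodule.span ℝ (Λ : Set V) = ⊤)
    (hint : ∀ x ∈ Λ, ∀ y ∈ Λ, ∃ n : ℤ, B x y = (n : ℝ))
    (hselfdual : ∀ v : V, v ∈ Λ ↔ ∀ l ∈ Λ, ∃ n : ℤ, B v l = (n : ℝ))
    (V₁ V₂ : Submodule ℝ V)
    (hcompl : IsCompl V₁ V₂)
    (horth : ∀ v₁ ∈ V₁, ∀ v₂ ∈ V₂, B v₁ v₂ = 0)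
    (hspan1 : Submodule.span ℝ ((Λ ⊓ V₁.toAddSubgroup : AddSubgroup V) : Set V) = V₁)
    (hspan2 : Submodule.span ℝ ((Λ ⊓ V₂.toAddSubgroup : AddSubgroup V) : Set V) = V₂) :
    (fun a : V => ((V₁.linearProjOfIsCompl V₂ hcompl) a : V)) '' (Λ : Set V) =
      (dualLattice B V₁ (Λ ⊓ V₁.toAddSubgroup) : Set V) :=
  selfdual_lattice_projection_eq_dualLattice_general B hsymm hnondeg Λ hint hselfdual V₁ V₂ hcompl
    horth hspan2
end

section
/- Let V be a finite-dimensional real vector space with a nondegenerate symmetric bilinear form B, let Λ be a self-dual integral lattice in V, let V = V₁ ⊕ V₂ be an orthogonal direct-sum decomposition, and set Λᵢ = Λ ∩ Vᵢ; assume each Λᵢ spans Vᵢ over ℝ. Then for every a₁ in the dual lattice Λ₁* (inside V₁), the set S = {a₂ ∈ V₂ : a₁ + a₂ ∈ Λ} is a coset of Λ₂ in V₂: S is nonempty, and for any a₂ ∈ S one has S = {a₂ + λ : λ ∈ Λ₂}. -/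
open LinearMap (BilinForm)
open Module Submodule

theorem AddSubgroup.setOf_mem_and_add_mem_eq {G : Type*} [AddCommGroup G] (Λ H : AddSubgroup G)
    {a b : G} (hb : b ∈ H) (hab : a + b ∈ Λ) :
    {x | x ∈ H ∧ a + x ∈ Λ} = {x | ∃ l ∈ Λ ⊓ H, x = b + l} := by
  ext x
  constructor
  · rintro ⟨hxH, hxΛ⟩
    refine ⟨x - b, ⟨?_, H.sub_mem hxH hb⟩, by abel⟩
    simpa using Λ.sub_mem hxΛ hab
  · rintro ⟨l, ⟨hlΛ, hlH⟩, rfl⟩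
    refine ⟨H.add_mem hb hlH, ?_⟩
    simpa [add_assoc] using Λ.add_mem hab hlΛ

theorem Submodule.span_comap_subtype_eq_top_iff {V : Type*} [AddCommGroup V] [Module ℝ V]
    {Λ : Submodule ℤ V} {W : Submodule ℝ V} :
    span ℝ (Λ.comap (W.subtype.restrictScalars ℤ) : Set W) = ⊤ ↔
      span ℝ ((Λ : Set V) ∩ W) = W := by
  rw [← (map_injective_of_injective W.injective_subtype).eq_iff, map_span, map_top,
    range_subtype, comap_coe, LinearMap.coe_restrictScalars, coe_subtype,
    Set.image_preimage_eq_inter_range, Subtype.range_coe_subtype, SetLike.setOfPred_mem_eq]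

namespace LinearMap.BilinForm

section DualSubmodule

variable {R S M : Type*} [CommRing R] [Field S] [AddCommGroup M] [Algebra R S] [Module R M]
  [Module S M] [IsScalarTower R S M] (B : BilinForm S M)

theorem dualSubmodule_antitone : Antitone (B.dualSubmodule (R := R)) :=
  fun _ _ h _ hx y hy => hx y (h hy)

end DualSubmodule

theorem mem_dualSubmodule_iff_exists_int {M : Type*} [AddCommGroup M] [Module ℝ M]
    (B : BilinForm ℝ M) (N : Submodule ℤ M) (x : M) :
    x ∈ B.dualSubmodule N ↔ ∀ y ∈ N, ∃ n : ℤ, B x y = n := by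
  simp only [mem_dualSubmodule, mem_one, algebraMap_int_eq, eq_intCast, eq_comm]

section ZLattice

variable {E : Type*} [NormedAddCommGroup E] [NormedSpace ℝ E] [FiniteDimensional ℝ E]
  {B : BilinForm ℝ E}

theorem discreteTopology_dualSubmodule_s3 (hB : B.Nondegenerate) {L : Submodule ℤ E}
    (hL : span ℝ (L : Set E) = ⊤) : DiscreteTopology (B.dualSubmodule L) := by
  classical
  let b := Basis.ofSpan hL.ge
  have hbL : span ℤ (Set.range b) ≤ L := span_le.2 (Basis.ofSpan_subset _)
  have hdual : B.dualSubmodule L ≤ span ℤ (Set.range (B.dualBasis hB b)) :=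
    dualSubmodule_span_of_basis (R := ℤ) B hB b ▸ B.dualSubmodule_antitone hbL
  exact DiscreteTopology.of_subset
    (inferInstance : DiscreteTopology (span ℤ (Set.range (B.dualBasis hB b)))) hdual

theorem eq_dualSubmodule_of_le_of_dualSubmodule_le (hB : B.Nondegenerate) (hB' : B.IsSymm)
    {L P : Submodule ℤ E} (hL : span ℝ (L : Set E) = ⊤) (hLP : L ≤ P)
    (hPL : P ≤ B.dualSubmodule L) (hdual : B.dualSubmodule P ≤ L) :
    P = B.dualSubmodule L := by
  have : DiscreteTopology P := (discreteTopology_dualSubmodule_s3 hB hL).of_subset hPL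
  have : IsZLattice ℝ P := ⟨top_unique (hL ▸ span_mono hLP)⟩
  have := ZLattice.module_free ℝ P
  let b := (Module.Free.chooseBasis ℤ P).ofZLatticeBasis ℝ P
  have hP : span ℤ (Set.range b) = P := Basis.ofZLatticeBasis_span ℝ P _
  refine le_antisymm hPL ?_
  calc B.dualSubmodule L ≤ B.dualSubmodule (B.dualSubmodule P) :=
        B.dualSubmodule_antitone hdual
    _ = P := hP ▸ dualSubmodule_dualSubmodule_of_basis B hB hB' b

end ZLattice

section OrthogonalDecomposition

variable {R M : Type*} [CommRing R] [AddCommGroup M] [Module R M] {B : BilinForm R M}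
  {V₁ V₂ : Submodule R M}

theorem apply_projection_right_s3 (hcompl : IsCompl V₁ V₂)
    (horth : ∀ v₁ ∈ V₁, ∀ v₂ ∈ V₂, B v₁ v₂ = 0) {y : M} (hy : y ∈ V₁) (x : M) :
    B y (V₁.projection V₂ hcompl x) = B y x := by
  conv_rhs => rw [← projection_add_projection_eq_self hcompl x]
  rw [map_add, horth y hy _ (projection_apply_mem _ _), add_zero]

theorem nondegenerate_restrict_of_isCompl_s3 (hB : B.IsRefl) (hsep : LinearMap.SeparatingLeft B)
    (hcompl : IsCompl V₁ V₂) (horth : ∀ v₁ ∈ V₁, ∀ v₂ ∈ V₂, B v₁ v₂ = 0) :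
    (B.restrict V₁).Nondegenerate := by
  refine B.nondegenerate_restrict_of_disjoint_orthogonal hB <| disjoint_def.2 fun x hx hx' => ?_
  refine hsep x fun z => ?_
  rw [← apply_projection_right_s3 hcompl horth hx z]
  exact hB _ _ (hx' _ (projection_apply_mem _ _))

end OrthogonalDecomposition

section SelfDualLattice

variable {V : Type*} [NormedAddCommGroup V] [NormedSpace ℝ V] [FiniteDimensional ℝ V]
  {B : BilinForm ℝ V}

theorem map_projectionOnto_eq_dualSubmodule (hB : B.IsSymm) (hsep : LinearMap.SeparatingLeft B)
    {Λ : Submodule ℤ V} (hint : Λ ≤ B.dualSubmodule Λ) (hself : B.dualSubmodule Λ ≤ Λ)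
    {V₁ V₂ : Submodule ℝ V} (hcompl : IsCompl V₁ V₂)
    (horth : ∀ v₁ ∈ V₁, ∀ v₂ ∈ V₂, B v₁ v₂ = 0)
    (hspan : span ℝ (Λ.comap (V₁.subtype.restrictScalars ℤ) : Set V₁) = ⊤) :
    Λ.map ((V₁.projectionOnto V₂ hcompl).restrictScalars ℤ) =
      (B.restrict V₁).dualSubmodule (Λ.comap (V₁.subtype.restrictScalars ℤ)) := by
  refine eq_dualSubmodule_of_le_of_dualSubmodule_le
    (nondegenerate_restrict_of_isCompl_s3 hB.isRefl hsep hcompl horth) ⟨fun x y => hB.eq x y⟩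
    hspan ?_ ?_ ?_
  · intro x hx
    exact ⟨x, hx, projectionOnto_apply_left hcompl x⟩
  · rintro _ ⟨l, hl, rfl⟩ y hy
    change B (V₁.projection V₂ hcompl l) y ∈ 1
    rw [hB.eq, apply_projection_right_s3 hcompl horth y.2, hB.eq]
    exact hint hl y hy
  · intro y hy
    refine hself fun l hl => ?_
    change B y l ∈ 1
    rw [← apply_projection_right_s3 hcompl horth y.2]
    exact hy _ ⟨l, hl, rfl⟩

end SelfDualLattice

end LinearMap.BilinForm

open LinearMap.BilinForm

theorem selfdual_lattice_fiber_is_coset_general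
    {V : Type*} [NormedAddCommGroup V] [NormedSpace ℝ V] [FiniteDimensional ℝ V]
    (B : V →ₗ[ℝ] V →ₗ[ℝ] ℝ)
    (hsymm : ∀ x y, B x y = B y x)
    (hnondeg : ∀ x, (∀ y, B x y = 0) → x = 0)
    (Λ : AddSubgroup V)
    (hint : ∀ x ∈ Λ, ∀ y ∈ Λ, ∃ n : ℤ, B x y = (n : ℝ))
    (hselfdual : ∀ v : V, v ∈ Λ ↔ ∀ l ∈ Λ, ∃ n : ℤ, B v l = (n : ℝ))
    (V₁ V₂ : Submodule ℝ V)
    (hcompl : IsCompl V₁ V₂)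
    (horth : ∀ v₁ ∈ V₁, ∀ v₂ ∈ V₂, B v₁ v₂ = 0)
    (hspan1 : Submodule.span ℝ ((Λ ⊓ V₁.toAddSubgroup : AddSubgroup V) : Set V) = V₁) :
    ∀ a₁ ∈ dualLattice B V₁ (Λ ⊓ V₁.toAddSubgroup),
      ({a₂ : V | a₂ ∈ V₂ ∧ a₁ + a₂ ∈ Λ}).Nonempty ∧
      ∀ a₂ ∈ {a₂ : V | a₂ ∈ V₂ ∧ a₁ + a₂ ∈ Λ},
        {a₂' : V | a₂' ∈ V₂ ∧ a₁ + a₂' ∈ Λ} =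
          {x : V | ∃ l ∈ (Λ ⊓ V₂.toAddSubgroup : AddSubgroup V), x = a₂ + l} := by
  intro a₁ ha₁
  have hint' : Λ.toIntSubmodule ≤ dualSubmodule B Λ.toIntSubmodule := fun x hx =>
    (mem_dualSubmodule_iff_exists_int B _ x).2 (hint x hx)
  have hself : dualSubmodule B Λ.toIntSubmodule ≤ Λ.toIntSubmodule := fun x hx =>
    (hselfdual x).2 ((mem_dualSubmodule_iff_exists_int B _ x).1 hx)
  have hproj := map_projectionOnto_eq_dualSubmodule ⟨hsymm⟩ hnondeg hint' hself hcompl horth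
    (span_comap_subtype_eq_top_iff.2 hspan1)
  obtain ⟨l, hl, hla⟩ : (⟨a₁, ha₁.1⟩ : V₁) ∈ Λ.toIntSubmodule.map
      ((V₁.projectionOnto V₂ hcompl).restrictScalars ℤ) :=
    hproj ▸ (mem_dualSubmodule_iff_exists_int _ _ _).2 fun y hy => ha₁.2 y ⟨hy, y.2⟩
  have hl₂ : l - a₁ ∈ V₂ := by
    have hla' : V₁.projection V₂ hcompl l = a₁ := congrArg Subtype.val hla
    rw [← hla', ← projection_eq_self_sub_projection]
    exact projection_apply_mem _ _
  exact ⟨⟨l - a₁, hl₂, by simpa using hl⟩, fun a₂ ⟨ha₂V, ha₂Λ⟩ =>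
    AddSubgroup.setOf_mem_and_add_mem_eq Λ V₂.toAddSubgroup ha₂V ha₂Λ⟩

/-- If `Λ` is a self-dual integral lattice in a finite-dimensional real vector
space `V` with nondegenerate symmetric bilinear form `B`, and `V = V₁ ⊕ V₂` is an orthogonal
decomposition with `Λᵢ = Λ ∩ Vᵢ` spanning `Vᵢ`, then for every `a₁` in the dual lattice
`Λ₁*` inside `V₁`, the set `S = {a₂ ∈ V₂ : a₁ + a₂ ∈ Λ}` is a coset of `Λ₂` in `V₂`:
it is nonempty and for any `a₂ ∈ S`, `S = a₂ + Λ₂`. -/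
theorem selfdual_lattice_fiber_is_coset
    {V : Type*} [NormedAddCommGroup V] [NormedSpace ℝ V] [FiniteDimensional ℝ V]
    (B : V →ₗ[ℝ] V →ₗ[ℝ] ℝ)
    (hsymm : ∀ x y, B x y = B y x)
    (hnondeg : ∀ x, (∀ y, B x y = 0) → x = 0)
    (Λ : AddSubgroup V)
    (hdisc : DiscreteTopology Λ)
    (hspan : Submodule.span ℝ (Λ : Set V) = ⊤)
    (hint : ∀ x ∈ Λ, ∀ y ∈ Λ, ∃ n : ℤ, B x y = (n : ℝ))
    (hselfdual : ∀ v : V, v ∈ Λ ↔ ∀ l ∈ Λ, ∃ n : ℤ, B v l = (n : ℝ))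
    (V₁ V₂ : Submodule ℝ V)
    (hcompl : IsCompl V₁ V₂)
    (horth : ∀ v₁ ∈ V₁, ∀ v₂ ∈ V₂, B v₁ v₂ = 0)
    (hspan1 : Submodule.span ℝ ((Λ ⊓ V₁.toAddSubgroup : AddSubgroup V) : Set V) = V₁)
    (hspan2 : Submodule.span ℝ ((Λ ⊓ V₂.toAddSubgroup : AddSubgroup V) : Set V) = V₂) :
    ∀ a₁ ∈ dualLattice B V₁ (Λ ⊓ V₁.toAddSubgroup),
      ({a₂ : V | a₂ ∈ V₂ ∧ a₁ + a₂ ∈ Λ}).Nonempty ∧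
      ∀ a₂ ∈ {a₂ : V | a₂ ∈ V₂ ∧ a₁ + a₂ ∈ Λ},
        {a₂' : V | a₂' ∈ V₂ ∧ a₁ + a₂' ∈ Λ} =
          {x : V | ∃ l ∈ (Λ ⊓ V₂.toAddSubgroup : AddSubgroup V), x = a₂ + l} :=
  selfdual_lattice_fiber_is_coset_general B hsymm hnondeg Λ hint hselfdual V₁ V₂ hcompl horth hspan1
end
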